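/- arXiv:2111.14098 — 3 statements merged into one kernel-verified Lean document; each statement's English description precedes it below -/
import Mathlib

section
/- Let r ≥ 1, ω ∈ (0,1], δ > 0, ξ > 0, and ε_1,…,ε_r > 0. Let Ā_i and A_i (i = 1,…,r) be continuous i-multilinear maps on ℝ^n with ‖Ā_i − A_i‖ ≤ ε_i for each i, and let v ∈ ℝ^n satisfy ‖v‖ ≤ δ and ΔT̄_r(v) ≥ 0. Suppose that it is NOT the case that (ΔT̄_r(v) > 0 and ∑_{i=1}^r ε_i δ^i / i! ≤ ω ΔT̄_r(v)), but that ∑_{i=1}^r ε_i δ^i / i! ≤ ω ξ δ^r / r! (the 'absolute accuracy' outcome of the CHECK test). Then ΔT̄_r(v) ≤ ξ δ^r / r!, and |ΔT̄_r(w) − ΔT_r(w)| ≤ ξ δ^r / r! for every w ∈ ℝ^n with ‖w‖ ≤ δ. -/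
/-- The (inexact or exact) Taylor decrement of degree `r` built from the
`i`-multilinear maps `A i` (the `i`-th derivatives), evaluated at `s`:
`ΔT_r(s) = −∑_{i=1}^r A_i[s]^i / i!`. -/
noncomputable def taylorDecrement (n r : ℕ)
    (A : ∀ i : ℕ, ContinuousMultilinearMap ℝ
      (fun _ : Fin i => EuclideanSpace ℝ (Fin n)) ℝ)
    (s : EuclideanSpace ℝ (Fin n)) : ℝ :=
  -∑ i ∈ Finset.Icc 1 r, (A i fun _ => s) / (i.factorial : ℝ)

/-! Each term of `ΔT̄_r(w) − ΔT_r(w)` is `(A_i − Ā_i)[w]^i / i!`, of size at most `ε_i δ^i / i!`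
when `‖w‖ ≤ δ`, so the whole difference is bounded by the accuracy sum
`∑ ε_i δ^i / i! ≤ ω ξ δ^r / r! ≤ ξ δ^r / r!`. For `v`, the relative test can only fail when
`ΔT̄_r(v) ≤ 0` or when `ω ΔT̄_r(v)` lies below the accuracy sum, hence below `ω ξ δ^r / r!`. -/

open Finset

theorem ContinuousMultilinearMap.norm_sub_apply_const_le {𝕜 E F : Type*}
    [NontriviallyNormedField 𝕜] [SeminormedAddCommGroup E] [NormedSpace 𝕜 E]
    [SeminormedAddCommGroup F] [NormedSpace 𝕜 F]
    {i : ℕ} (f g : ContinuousMultilinearMap 𝕜 (fun _ : Fin i => E) F) {w : E} {δ : ℝ}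
    (hw : ‖w‖ ≤ δ) : ‖(f fun _ => w) - g fun _ => w‖ ≤ ‖f - g‖ * δ ^ i := by
  rw [← sub_apply]
  exact (f - g).le_opNorm_mul_pow_of_le
    ((pi_norm_le_iff_of_nonneg ((norm_nonneg w).trans hw)).2 fun _ => hw)

theorem abs_taylorDecrement_sub_le {n r : ℕ}
    {A Abar : ∀ i : ℕ, ContinuousMultilinearMap ℝ
      (fun _ : Fin i => EuclideanSpace ℝ (Fin n)) ℝ}
    {ε : ℕ → ℝ} (hacc : ∀ i ∈ Icc 1 r, ‖Abar i - A i‖ ≤ ε i)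
    {δ : ℝ} {w : EuclideanSpace ℝ (Fin n)} (hw : ‖w‖ ≤ δ) :
    |taylorDecrement n r Abar w - taylorDecrement n r A w| ≤
      ∑ i ∈ Icc 1 r, ε i * δ ^ i / (i.factorial : ℝ) := by
  have hδ : 0 ≤ δ := (norm_nonneg w).trans hw
  unfold taylorDecrement
  rw [neg_sub_neg, ← sum_sub_distrib]
  refine (abs_sum_le_sum_abs _ _).trans (sum_le_sum fun i hi => ?_)
  rw [div_sub_div_same, abs_div, Nat.abs_cast, abs_sub_comm, ← Real.norm_eq_abs]
  gcongr
  calc _ ≤ ‖Abar i - A i‖ * δ ^ i := (Abar i).norm_sub_apply_const_le (A i) hw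
    _ ≤ ε i * δ ^ i := by gcongr; exact hacc i hi

theorem sum_accuracy_nonneg {r : ℕ} {ε : ℕ → ℝ} {δ : ℝ} (hε : ∀ i ∈ Icc 1 r, 0 ≤ ε i)
    (hδ : 0 ≤ δ) : 0 ≤ ∑ i ∈ Icc 1 r, ε i * δ ^ i / (i.factorial : ℝ) :=
  sum_nonneg fun i hi => by have := hε i hi; positivity

theorem le_of_not_relative_test {t S B ω : ℝ} (hω : 0 < ω) (hS : 0 ≤ S)
    (hnotrel : ¬ (0 < t ∧ S ≤ ω * t)) (habs : S ≤ ω * B) : t ≤ B := by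
  have hB : 0 ≤ B := nonneg_of_mul_nonneg_right (hS.trans habs) hω
  by_cases ht : 0 < t
  · have hlt : ω * t < ω * B := (not_le.1 fun h => hnotrel ⟨ht, h⟩).trans_le habs
    exact (lt_of_mul_lt_mul_left hlt hω.le).le
  · linarith

theorem check_absolute_outcome_general (n r : ℕ)
    (ω δ ξ : ℝ) (hω0 : 0 < ω) (hω1 : ω ≤ 1)
    (ε : ℕ → ℝ)
    (A Abar : ∀ i : ℕ, ContinuousMultilinearMap ℝ
      (fun _ : Fin i => EuclideanSpace ℝ (Fin n)) ℝ)
    (hacc : ∀ i ∈ Finset.Icc 1 r, ‖Abar i - A i‖ ≤ ε i)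
    (v : EuclideanSpace ℝ (Fin n)) (hv : ‖v‖ ≤ δ)
    (hnotrel : ¬ (0 < taylorDecrement n r Abar v ∧
      ∑ i ∈ Finset.Icc 1 r, ε i * δ ^ i / (i.factorial : ℝ) ≤
        ω * taylorDecrement n r Abar v))
    (habs : ∑ i ∈ Finset.Icc 1 r, ε i * δ ^ i / (i.factorial : ℝ) ≤
      ω * ξ * δ ^ r / (r.factorial : ℝ)) :
    taylorDecrement n r Abar v ≤ ξ * δ ^ r / (r.factorial : ℝ) ∧
      ∀ w : EuclideanSpace ℝ (Fin n), ‖w‖ ≤ δ →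
        |taylorDecrement n r Abar w - taylorDecrement n r A w| ≤
          ξ * δ ^ r / (r.factorial : ℝ) := by
  have hS := sum_accuracy_nonneg (fun i hi => (norm_nonneg _).trans (hacc i hi))
    ((norm_nonneg v).trans hv)
  have habs' : _ ≤ ω * (ξ * δ ^ r / r.factorial) := habs.trans_eq (by ring)
  have hB : 0 ≤ ξ * δ ^ r / r.factorial := nonneg_of_mul_nonneg_right (hS.trans habs') hω0
  refine ⟨le_of_not_relative_test hω0 hS hnotrel habs', fun w hw => ?_⟩
  calc _ ≤ _ := abs_taylorDecrement_sub_le hacc hw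
    _ ≤ _ := habs'
    _ ≤ _ := mul_le_of_le_one_left hB hω1

/-- The `absolute` outcome of the CHECK test: if the relative
test fails but `∑_{i=1}^r ε_i δ^i / i! ≤ ω ξ δ^r / r!` holds, then
`ΔT̄_r(v) ≤ ξ δ^r / r!` and `|ΔT̄_r(w) − ΔT_r(w)| ≤ ξ δ^r / r!` for all
`w` with `‖w‖ ≤ δ`. -/
theorem check_absolute_outcome (n r : ℕ) (hr : 1 ≤ r)
    (ω δ ξ : ℝ) (hω0 : 0 < ω) (hω1 : ω ≤ 1) (hδ : 0 < δ) (hξ : 0 < ξ)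
    (ε : ℕ → ℝ) (hε : ∀ i ∈ Finset.Icc 1 r, 0 < ε i)
    (A Abar : ∀ i : ℕ, ContinuousMultilinearMap ℝ
      (fun _ : Fin i => EuclideanSpace ℝ (Fin n)) ℝ)
    (hacc : ∀ i ∈ Finset.Icc 1 r, ‖Abar i - A i‖ ≤ ε i)
    (v : EuclideanSpace ℝ (Fin n)) (hv : ‖v‖ ≤ δ)
    (hnonneg : 0 ≤ taylorDecrement n r Abar v)
    (hnotrel : ¬ (0 < taylorDecrement n r Abar v ∧
      ∑ i ∈ Finset.Icc 1 r, ε i * δ ^ i / (i.factorial : ℝ) ≤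
        ω * taylorDecrement n r Abar v))
    (habs : ∑ i ∈ Finset.Icc 1 r, ε i * δ ^ i / (i.factorial : ℝ) ≤
      ω * ξ * δ ^ r / (r.factorial : ℝ)) :
    taylorDecrement n r Abar v ≤ ξ * δ ^ r / (r.factorial : ℝ) ∧
      ∀ w : EuclideanSpace ℝ (Fin n), ‖w‖ ≤ δ →
        |taylorDecrement n r Abar w - taylorDecrement n r A w| ≤
          ξ * δ ^ r / (r.factorial : ℝ) :=
  check_absolute_outcome_general n r ω δ ξ hω0 hω1 ε A Abar hacc v hv hnotrel habs
end

section
/- Let p ≥ 1 be an integer, η_2 ∈ (0,1), L > 0, σ > 0, ω > 0, r ≥ 0, and let f_x, f̄_x, f_s, f̄_s, Δ, ΔT be real numbers with Δ > 0. Suppose that: |f̄_s − f_s| ≤ ω Δ; |f̄_x − f_x| ≤ ω Δ; |Δ − ΔT| ≤ ω Δ; |f_s − (f_x − ΔT)| ≤ L r^{p+1} / (p+1)!; Δ ≥ σ r^{p+1} / (p+1)!; σ ≥ 4L / (1 − η_2); and ω < (1 − η_2)/4. Then ρ := (f̄_x − f̄_s)/Δ satisfies |ρ − 1| < 1 − η_2,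 and in particular ρ ≥ η_2. -/
/-- Under the accuracy conditions of the AR$qp$EDA2
algorithm, when the regularization parameter is large enough
(`σ ≥ 4L/(1−η₂)`) and `ω < (1−η₂)/4`, the ratio
`ρ = (f̄_x − f̄_s)/Δ` satisfies `|ρ − 1| < 1 − η₂`, and in particular
`ρ ≥ η₂` (the iteration is very successful). -/
theorem very_successful_iteration (p : ℕ) (hp : 1 ≤ p)
    (η₂ L σ ω r : ℝ)
    (hη0 : 0 < η₂) (hη1 : η₂ < 1) (hL : 0 < L) (hσ0 : 0 < σ)
    (hω : 0 < ω) (hr : 0 ≤ r)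
    (fx fbarx fs fbars Δ ΔT : ℝ) (hΔ : 0 < Δ)
    (hfs : |fbars - fs| ≤ ω * Δ)
    (hfx : |fbarx - fx| ≤ ω * Δ)
    (hΔT : |Δ - ΔT| ≤ ω * Δ)
    (htaylor : |fs - (fx - ΔT)| ≤ L * r ^ (p + 1) / ((p + 1).factorial : ℝ))
    (hmodel : σ * r ^ (p + 1) / ((p + 1).factorial : ℝ) ≤ Δ)
    (hσbig : 4 * L / (1 - η₂) ≤ σ)
    (hωsmall : ω < (1 - η₂) / 4) :
    |(fbarx - fbars) / Δ - 1| < 1 - η₂ ∧ η₂ ≤ (fbarx - fbars) / Δ := by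
  have hfact : (0:ℝ) < ((p + 1).factorial : ℝ) := by positivity
  have habs : ∀ a : ℝ, a ≤ |a| ∧ -a ≤ |a| := fun a => ⟨le_abs_self a, neg_le_abs a⟩
  have hLr : L * r ^ (p + 1) / ((p + 1).factorial : ℝ) ≤ (1 - η₂) / 4 * Δ := by
    have h1 : 0 < 1 - η₂ := by linarith
    have hLσ : 4 * L ≤ σ * (1 - η₂) := by
      have := (div_le_iff₀ h1).mp hσbig
      linarith
    have hrp : 0 ≤ r ^ (p + 1) := by positivity
    rw [div_le_iff₀ hfact] at hmodel ⊢
    nlinarith [mul_le_mul_of_nonneg_right hmodel h1.le, mul_pos hΔ hfact]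
  have key : |(fbarx - fbars) - Δ| < (1 - η₂) * Δ := by
    obtain ⟨a1, a2⟩ := abs_le.mp hfs
    obtain ⟨b1, b2⟩ := abs_le.mp hfx
    obtain ⟨c1, c2⟩ := abs_le.mp hΔT
    obtain ⟨d1, d2⟩ := abs_le.mp htaylor
    rw [abs_lt]
    constructor <;> nlinarith
  have hne : Δ ≠ 0 := hΔ.ne'
  have h1 : |(fbarx - fbars) / Δ - 1| < 1 - η₂ := by
    rw [div_sub_one hne, abs_div, abs_of_pos hΔ, div_lt_iff₀ hΔ]
    exact key
  refine ⟨h1, ?_⟩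
  have := abs_lt.mp h1
  have h2 : η₂ < (fbarx - fbars) / Δ := by linarith [this.1]
  exact h2.le
end

section
/- Let 1 ≤ j ≤ p be integers, τ > 0, ε > 0, δ ∈ (0,1], r > 0, and suppose τ ε δ^j ≤ r^{p+1} χ_j(δ/r), where χ_j(t) = ∑_{ℓ=1}^j t^ℓ / ℓ!. Then: (a) if r ≤ δ, one has r^{p−j+1} ≥ τ ε / 2; and (b) if r > δ, one has r^p ≥ (τ ε / 2) δ^{j−1}. -/
/-! With `q = δ / r`, every term `q^ℓ` of `χ_j(q)` is at most `q^j` when `q ≥ 1` and at most `q`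
when `q ≤ 1`, while `∑_{ℓ ≥ 1} 1/ℓ! ≤ 2`. Hence `χ_j(q) ≤ 2 q^j`, resp. `χ_j(q) ≤ 2 q`, and
cancelling `δ^j` in the hypothesis gives the two bounds. -/

open Finset

noncomputable def chi (j : ℕ) (t : ℝ) : ℝ :=
  ∑ ℓ ∈ Icc 1 j, t ^ ℓ / (ℓ.factorial : ℝ)

lemma sum_Icc_one_div_factorial_le_two (j : ℕ) :
    ∑ ℓ ∈ Icc 1 j, (1 / ℓ.factorial : ℝ) ≤ 2 := by
  have hIcc : {m ∈ range (j + 1) | 1 ≤ m} = Icc 1 j := by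
    ext m
    simp only [mem_filter, mem_range, mem_Icc]
    omega
  simpa [hIcc] using Complex.sum_div_factorial_le (α := ℝ) 1 (j + 1) one_pos

lemma chi_le_of_forall_pow_le (j : ℕ) {t b : ℝ} (hb0 : 0 ≤ b)
    (hb : ∀ ℓ ∈ Icc 1 j, t ^ ℓ ≤ b) : chi j t ≤ 2 * b := by
  calc chi j t ≤ ∑ ℓ ∈ Icc 1 j, b * (1 / ℓ.factorial : ℝ) := by
        refine sum_le_sum fun ℓ hℓ ↦ ?_
        rw [mul_one_div]
        exact div_le_div_of_nonneg_right (hb ℓ hℓ) (by positivity)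
    _ = b * ∑ ℓ ∈ Icc 1 j, (1 / ℓ.factorial : ℝ) := (mul_sum _ _ _).symm
    _ ≤ b * 2 := mul_le_mul_of_nonneg_left (sum_Icc_one_div_factorial_le_two j) hb0
    _ = 2 * b := mul_comm _ _

lemma chi_le_of_one_le (j : ℕ) {t : ℝ} (ht : 1 ≤ t) : chi j t ≤ 2 * t ^ j :=
  chi_le_of_forall_pow_le j (by positivity) fun _ hℓ ↦ pow_le_pow_right₀ ht (mem_Icc.1 hℓ).2

lemma chi_le_of_le_one (j : ℕ) {t : ℝ} (ht0 : 0 ≤ t) (ht1 : t ≤ 1) : chi j t ≤ 2 * t :=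
  chi_le_of_forall_pow_le j ht0 fun _ hℓ ↦
    pow_le_of_le_one ht0 ht1 (Nat.one_le_iff_ne_zero.1 (mem_Icc.1 hℓ).1)

theorem step_length_lower_bound_general (j p : ℕ) (hj : 1 ≤ j) (hjp : j ≤ p)
    (τ ε δ r : ℝ)
    (hδ0 : 0 < δ) (hr : 0 < r)
    (h : τ * ε * δ ^ j ≤
      r ^ (p + 1) * ∑ ℓ ∈ Finset.Icc 1 j, (δ / r) ^ ℓ / (ℓ.factorial : ℝ)) :
    (r ≤ δ → τ * ε / 2 ≤ r ^ (p - j + 1)) ∧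
    (δ < r → τ * ε / 2 * δ ^ (j - 1) ≤ r ^ p) := by
  change τ * ε * δ ^ j ≤ r ^ (p + 1) * chi j (δ / r) at h
  constructor
  · intro hrδ
    have hχ := chi_le_of_one_le j ((one_le_div hr).2 hrδ)
    have key : τ * ε * δ ^ j ≤ 2 * r ^ (p - j + 1) * δ ^ j := by
      calc τ * ε * δ ^ j ≤ r ^ (p + 1) * (2 * (δ / r) ^ j) := h.trans (by gcongr)
        _ = 2 * r ^ (p - j + 1) * δ ^ j := by
          rw [show p + 1 = (p - j + 1) + j by omega, pow_add, div_pow]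
          field_simp
    linarith [le_of_mul_le_mul_right key (pow_pos hδ0 j)]
  · intro hδr
    have hχ := chi_le_of_le_one j (div_pos hδ0 hr).le ((div_le_one hr).2 hδr.le)
    have key : τ * ε * δ ^ (j - 1) * δ ≤ 2 * r ^ p * δ := by
      calc τ * ε * δ ^ (j - 1) * δ = τ * ε * δ ^ j := by
            rw [mul_assoc, ← pow_succ, Nat.sub_add_cancel hj]
        _ ≤ r ^ (p + 1) * (2 * (δ / r)) := h.trans (by gcongr)
        _ = 2 * r ^ p * δ := by rw [pow_succ]; field_simp
    linarith [le_of_mul_le_mul_right key hδ0]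

/-- Step-length lower bound: if
`τ ε δ^j ≤ r^{p+1} χ_j(δ/r)` with `χ_j(t) = ∑_{ℓ=1}^j t^ℓ/ℓ!`, then
`r ≤ δ` implies `r^{p−j+1} ≥ τ ε / 2`, while `r > δ` implies
`r^p ≥ (τ ε / 2) δ^{j−1}`. -/
theorem step_length_lower_bound (j p : ℕ) (hj : 1 ≤ j) (hjp : j ≤ p)
    (τ ε δ r : ℝ) (hτ : 0 < τ) (hε : 0 < ε)
    (hδ0 : 0 < δ) (hδ1 : δ ≤ 1) (hr : 0 < r)
    (h : τ * ε * δ ^ j ≤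
      r ^ (p + 1) * ∑ ℓ ∈ Finset.Icc 1 j, (δ / r) ^ ℓ / (ℓ.factorial : ℝ)) :
    (r ≤ δ → τ * ε / 2 ≤ r ^ (p - j + 1)) ∧
    (δ < r → τ * ε / 2 * δ ^ (j - 1) ≤ r ^ p) :=
  step_length_lower_bound_general j p hj hjp τ ε δ r hδ0 hr h
end
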